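/- Let $0<p<\infty$ and let $(A_l)_{l\geq 0}$ be a sequence in $\mathcal{L}_{p,\infty}$ with $\lim_{t\to\infty} t^{1/p}\mu(t,A_l) = c_l$ for each $l$, and let $A$ be an operator such that $\mathrm{dist}_{\mathcal{L}_{p,\infty}}(A_l - A, (\mathcal{L}_{p,\infty})_0) \to 0$ as $l \to \infty$. Then the limits $\lim_{t\to\infty} t^{1/p}\mu(t,A)$ and $\lim_{l\to\infty} c_l$ both exist and are equal. -/

import Mathlib

open Filter Topology ENNReal

variable {H : Type*} [NormedAddCommGroup H] [InnerProductSpace ℂ H] [CompleteSpace H]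

/-- The singular value function `μ(t,T)`: the distance from `T` to operators of rank `≤ t`. -/
noncomputable def sv (T : H →L[ℂ] H) (t : ℝ) : ℝ :=
  sInf {c : ℝ | ∃ R : H →L[ℂ] H, FiniteDimensional ℂ (LinearMap.range (R : H →ₗ[ℂ] H)) ∧
    (Module.finrank ℂ (LinearMap.range (R : H →ₗ[ℂ] H)) : ℝ) ≤ t ∧ c = ‖T - R‖}

/-- The weak Schatten quasinorm `‖T‖_{p,∞} = sup_{t ≥ 0} t^{1/p} μ(t,T)` (valued in `ℝ≥0∞`). -/
noncomputable def wnorm (p : ℝ) (T : H →L[ℂ] H) : ℝ≥0∞ :=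
  ⨆ t : {t : ℝ // 0 ≤ t}, ENNReal.ofReal ((t : ℝ) ^ (1 / p) * sv T t)

/-- The separable ideal `(𝓛_{p,∞})₀`: operators with `t^{1/p} μ(t,T) → 0` as `t → ∞`. -/
def zeroIdeal (p : ℝ) : Set (H →L[ℂ] H) :=
  {T | Tendsto (fun t : ℝ => t ^ (1 / p) * sv T t) atTop (𝓝 0)}
/-- The distance of an operator `A` to the separable ideal `(𝓛_{p,∞})₀`,
measured in the weak Schatten quasinorm. -/
noncomputable def wdist (p : ℝ) (A : H →L[ℂ] H) : ℝ≥0∞ :=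
  ⨅ B ∈ zeroIdeal (H := H) p, wnorm p (A - B)

/-!
Write `g_T(t) = t^{1/p} μ(t,T)`. Ky Fan's inequality `μ(t + s, X + Y) ≤ μ(t,X) + μ(s,Y)`, applied
with `s = δ t`, gives for every `δ > 0`
`limsup g_{X+Y} ≤ (1+δ)^{1/p} (limsup g_X + δ^{-1/p} limsup g_Y)`, and the same with `liminf`
in place of both `limsup g_{X+Y}` and `limsup g_X`. Since `limsup g_T ≤ dist(T, (𝓛_{p,∞})₀)`,
the errors `e_l = limsup g_{A_l - A}` tend to `0`. Applying the inequalities to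
`A = A_l + (A - A_l)` and `A_l = A + (A_l - A)`, then letting `l → ∞` and `δ → 0`, gives
`limsup c_l ≤ liminf g_A ≤ limsup g_A ≤ liminf c_l`.
All limits superior and inferior are taken in `ℝ≥0∞`, where they always exist.
-/

set_option linter.unusedSectionVars false

lemma sv_nonneg (T : H →L[ℂ] H) (t : ℝ) : 0 ≤ sv T t :=
  Real.sInf_nonneg <| by rintro _ ⟨R, -, -, rfl⟩; positivity

lemma sv_le_norm_sub (T R : H →L[ℂ] H)
    [FiniteDimensional ℂ (LinearMap.range (R : H →ₗ[ℂ] H))] {t : ℝ}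
    (hR : (Module.finrank ℂ (LinearMap.range (R : H →ₗ[ℂ] H)) : ℝ) ≤ t) : sv T t ≤ ‖T - R‖ :=
  csInf_le ⟨0, by rintro _ ⟨S, -, -, rfl⟩; positivity⟩ ⟨R, inferInstance, hR, rfl⟩

lemma le_sv {T : H →L[ℂ] H} {t a : ℝ} (ht : 0 ≤ t)
    (h : ∀ R : H →L[ℂ] H, FiniteDimensional ℂ (LinearMap.range (R : H →ₗ[ℂ] H)) →
      (Module.finrank ℂ (LinearMap.range (R : H →ₗ[ℂ] H)) : ℝ) ≤ t → a ≤ ‖T - R‖) :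
    a ≤ sv T t := by
  have h0 : LinearMap.range ((0 : H →L[ℂ] H) : H →ₗ[ℂ] H) = ⊥ := by
    rw [ContinuousLinearMap.toLinearMap_zero, LinearMap.range_zero]
  refine le_csInf ⟨_, 0, h0 ▸ inferInstance, by rwa [h0, finrank_bot, Nat.cast_zero], rfl⟩ ?_
  rintro _ ⟨R, hR, hRt, rfl⟩
  exact h R hR hRt

lemma sv_neg (T : H →L[ℂ] H) (t : ℝ) : sv (-T) t = sv T t := by
  have hrange (R : H →L[ℂ] H) : LinearMap.range ((-R : H →L[ℂ] H) : H →ₗ[ℂ] H) =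
      LinearMap.range (R : H →ₗ[ℂ] H) := by
    rw [ContinuousLinearMap.toLinearMap_neg, LinearMap.range_neg]
  unfold sv
  congr 1
  ext a
  constructor <;> rintro ⟨R, hR, hRt, rfl⟩ <;> refine ⟨-R, hrange R ▸ hR, hrange R ▸ hRt, ?_⟩
  · rw [sub_neg_eq_add, ← norm_neg (T + R), neg_add']
  · rw [neg_sub_neg, norm_sub_rev]

lemma sv_add_le (X Y : H →L[ℂ] H) {t s : ℝ} (ht : 0 ≤ t) (hs : 0 ≤ s) :
    sv (X + Y) (t + s) ≤ sv X t + sv Y s := by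
  rw [← sub_le_iff_le_add]
  refine le_sv ht fun R hR hRt => ?_
  rw [sub_le_comm]
  refine le_sv hs fun S hS hSs => ?_
  rw [sub_le_iff_le_add']
  have hle := LinearMap.range_add_le (R : H →ₗ[ℂ] H) (S : H →ₗ[ℂ] H)
  have := Submodule.finiteDimensional_of_le hle
  have hrank : (Module.finrank ℂ (LinearMap.range ((R + S : H →L[ℂ] H) : H →ₗ[ℂ] H)) : ℝ) ≤
      t + s := by
    have := (Submodule.finrank_mono hle).trans (Submodule.finrank_add_le_finrank_add_finrank _ _)
    exact (Nat.cast_le.mpr this).trans (by push_cast; linarith)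
  calc sv (X + Y) (t + s) ≤ ‖X + Y - (R + S)‖ := sv_le_norm_sub _ _ hrank
    _ ≤ ‖X - R‖ + ‖Y - S‖ := by rw [add_sub_add_comm]; exact norm_add_le _ _

section LimsupLiminf

variable {α : Type*} {f : Filter α}

lemma eventually_le_limsup_add {v : α → ℝ≥0∞} (hv : limsup v f ≠ ⊤) {ε : ℝ≥0∞} (hε : ε ≠ 0) :
    ∀ᶠ a in f, v a ≤ limsup v f + ε :=
  (eventually_lt_of_limsup_lt (ENNReal.lt_add_right hv hε)).mono fun _ => le_of_lt

variable [f.NeBot]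

lemma limsup_add_le_limsup_add_limsup (u v : α → ℝ≥0∞) :
    limsup (u + v) f ≤ limsup u f + limsup v f := by
  refine ENNReal.le_of_forall_pos_le_add fun ε hε hfin => ?_
  have hv := eventually_le_limsup_add (ENNReal.add_ne_top.mp hfin.ne).2 (f := f)
    (ENNReal.coe_ne_zero.mpr hε.ne')
  calc limsup (u + v) f ≤ limsup (fun a => u a + (limsup v f + ε)) f :=
        limsup_le_limsup (hv.mono fun a ha => by simp only [Pi.add_apply]; gcongr)
    _ = limsup u f + limsup v f + ε := by
        rw [limsup_add_const _ _ _ (by isBoundedDefault) (by isBoundedDefault), add_assoc]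

lemma liminf_add_le_liminf_add_limsup (u v : α → ℝ≥0∞) :
    liminf (u + v) f ≤ liminf u f + limsup v f := by
  refine ENNReal.le_of_forall_pos_le_add fun ε hε hfin => ?_
  have hv := eventually_le_limsup_add (ENNReal.add_ne_top.mp hfin.ne).2 (f := f)
    (ENNReal.coe_ne_zero.mpr hε.ne')
  calc liminf (u + v) f ≤ liminf (fun a => u a + (limsup v f + ε)) f :=
        liminf_le_liminf (hv.mono fun a ha => by simp only [Pi.add_apply]; gcongr)
    _ = liminf u f + limsup v f + ε := by
        rw [liminf_add_const _ _ _ (by isBoundedDefault) (by isBoundedDefault), add_assoc]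

variable {K D a : ℝ≥0∞} {c e : α → ℝ≥0∞}

lemma limsup_le_mul_of_le_mul_add (hK : K ≠ ⊤) (hD : D ≠ ⊤) (he : Tendsto e f (𝓝 0))
    (h : ∀ i, c i ≤ K * (a + D * e i)) : limsup c f ≤ K * a := by
  have hlim : Tendsto (fun i => K * (a + D * e i)) f (𝓝 (K * a)) := by
    simpa using ENNReal.Tendsto.const_mul
      (tendsto_const_nhds.add (ENNReal.Tendsto.const_mul he (Or.inr hD))) (Or.inr hK)
  exact (limsup_le_limsup (Eventually.of_forall h)).trans_eq hlim.limsup_eq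

lemma le_mul_liminf_of_le_mul_add (hK : K ≠ ⊤) (hD : D ≠ ⊤) (he : Tendsto e f (𝓝 0))
    (h : ∀ i, a ≤ K * (c i + D * e i)) : a ≤ K * liminf c f := by
  have hDe : Tendsto (fun i => D * e i) f (𝓝 0) := by
    simpa using ENNReal.Tendsto.const_mul he (Or.inr hD)
  calc a ≤ liminf (fun i => K * (c i + D * e i)) f :=
        le_liminf_of_le (by isBoundedDefault) (Eventually.of_forall h)
    _ = K * liminf c f := by
      rw [ENNReal.liminf_const_mul_of_ne_top hK]
      exact congrArg _ (ENNReal.liminf_add_of_right_tendsto_zero hDe c)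

end LimsupLiminf

lemma le_of_forall_le_ofReal_one_add_rpow_mul {q : ℝ} {a b : ℝ≥0∞}
    (h : ∀ δ > 0, a ≤ ENNReal.ofReal ((1 + δ) ^ q) * b) : a ≤ b := by
  rcases eq_or_ne b ⊤ with rfl | hb
  · exact le_top
  have hK : Tendsto (fun δ : ℝ => ENNReal.ofReal ((1 + δ) ^ q)) (𝓝[>] 0) (𝓝 1) := by
    have : ContinuousAt (fun δ : ℝ => ENNReal.ofReal ((1 + δ) ^ q)) 0 :=
      ENNReal.continuous_ofReal.continuousAt.comp
        ((continuous_const.add continuous_id).continuousAt.rpow_const (Or.inl (by norm_num)))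
    simpa using this.tendsto.mono_left nhdsWithin_le_nhds
  exact ge_of_tendsto (by simpa using ENNReal.Tendsto.mul_const hK (Or.inr hb))
    (eventually_nhdsWithin_of_forall (s := Set.Ioi 0) h)

lemma map_const_mul_atTop {β : Type*} [Semifield β] [LinearOrder β] [IsStrictOrderedRing β] {a : β}
    (ha : 0 < a) : map (fun t => a * t) atTop = atTop := by
  simpa [div_eq_mul_inv, mul_comm] using map_div_atTop_eq a⁻¹ (inv_pos.mpr ha)

lemma limsup_comp_const_mul_atTop {β : Type*} [CompleteLattice β] (u : ℝ → β) {a : ℝ}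
    (ha : 0 < a) :
    limsup (fun t => u (a * t)) atTop = limsup u atTop := by
  rw [← Function.comp_def, limsup_comp, map_const_mul_atTop ha]

lemma liminf_comp_const_mul_atTop {β : Type*} [CompleteLattice β] (u : ℝ → β) {a : ℝ}
    (ha : 0 < a) :
    liminf (fun t => u (a * t)) atTop = liminf u atTop := by
  rw [← Function.comp_def, liminf_comp, map_const_mul_atTop ha]

noncomputable def scaledSv (p : ℝ) (T : H →L[ℂ] H) (t : ℝ) : ℝ≥0∞ :=
  ENNReal.ofReal (t ^ (1 / p) * sv T t)

lemma scaledSv_neg (p : ℝ) (T : H →L[ℂ] H) : scaledSv p (-T) = scaledSv p T := by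
  ext t
  simp only [scaledSv, sv_neg]

lemma tendsto_scaledSv {p c : ℝ} {T : H →L[ℂ] H}
    (h : Tendsto (fun t : ℝ => t ^ (1 / p) * sv T t) atTop (𝓝 c)) :
    Tendsto (scaledSv p T) atTop (𝓝 (ENNReal.ofReal c)) :=
  (ENNReal.continuous_ofReal.tendsto c).comp h

lemma limsup_scaledSv_le_wnorm (p : ℝ) (T : H →L[ℂ] H) :
    limsup (scaledSv p T) atTop ≤ wnorm p T :=
  limsup_le_of_le (by isBoundedDefault) <| (eventually_ge_atTop 0).mono fun t ht =>
    le_iSup (fun s : {s : ℝ // 0 ≤ s} => scaledSv p T s) ⟨t, ht⟩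

lemma scaledSv_add_le (p : ℝ) (X Y : H →L[ℂ] H) {δ t : ℝ} (hδ : 0 < δ) (ht : 0 ≤ t) :
    scaledSv p (X + Y) ((1 + δ) * t) ≤ ENNReal.ofReal ((1 + δ) ^ (1 / p)) *
      (scaledSv p X t + ENNReal.ofReal (δ ^ (-(1 / p))) * scaledSv p Y (δ * t)) := by
  have hδt : 0 ≤ δ * t := mul_nonneg hδ.le ht
  have hsv : sv (X + Y) ((1 + δ) * t) ≤ sv X t + sv Y (δ * t) := by
    simpa only [add_mul, one_mul] using sv_add_le X Y ht hδt
  have hpow : δ ^ (-(1 / p)) * (δ * t) ^ (1 / p) = t ^ (1 / p) := by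
    rw [Real.mul_rpow hδ.le ht, ← mul_assoc, ← Real.rpow_add hδ, neg_add_cancel, Real.rpow_zero,
      one_mul]
  have hX := mul_nonneg (Real.rpow_nonneg ht (1 / p)) (sv_nonneg X t)
  have hY := mul_nonneg (Real.rpow_nonneg hδt (1 / p)) (sv_nonneg Y (δ * t))
  have hδp := Real.rpow_nonneg hδ.le (-(1 / p))
  unfold scaledSv
  rw [← ENNReal.ofReal_mul hδp, ← ENNReal.ofReal_add hX (mul_nonneg hδp hY),
    ← ENNReal.ofReal_mul (Real.rpow_nonneg (by linarith) _)]
  refine ENNReal.ofReal_le_ofReal ?_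
  calc ((1 + δ) * t) ^ (1 / p) * sv (X + Y) ((1 + δ) * t)
      ≤ (1 + δ) ^ (1 / p) * t ^ (1 / p) * (sv X t + sv Y (δ * t)) := by
        rw [Real.mul_rpow (by linarith) ht]
        exact mul_le_mul_of_nonneg_left hsv (by positivity)
    _ = (1 + δ) ^ (1 / p) *
          (t ^ (1 / p) * sv X t + δ ^ (-(1 / p)) * ((δ * t) ^ (1 / p) * sv Y (δ * t))) := by
        rw [← mul_assoc _ ((δ * t) ^ (1 / p)), hpow]
        ring

section

variable (p : ℝ) (X Y : H →L[ℂ] H) {δ : ℝ}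

lemma limsup_scaledSv_add_le (hδ : 0 < δ) :
    limsup (scaledSv p (X + Y)) atTop ≤ ENNReal.ofReal ((1 + δ) ^ (1 / p)) *
      (limsup (scaledSv p X) atTop +
        ENNReal.ofReal (δ ^ (-(1 / p))) * limsup (scaledSv p Y) atTop) := by
  calc limsup (scaledSv p (X + Y)) atTop
      = limsup (fun t => scaledSv p (X + Y) ((1 + δ) * t)) atTop :=
        (limsup_comp_const_mul_atTop _ (by linarith)).symm
    _ ≤ limsup (fun t => ENNReal.ofReal ((1 + δ) ^ (1 / p)) *
          (scaledSv p X t + ENNReal.ofReal (δ ^ (-(1 / p))) * scaledSv p Y (δ * t))) atTop :=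
        limsup_le_limsup ((eventually_ge_atTop 0).mono fun t ht => scaledSv_add_le p X Y hδ ht)
    _ ≤ _ := by
        rw [ENNReal.limsup_const_mul_of_ne_top ENNReal.ofReal_ne_top]
        gcongr
        refine (limsup_add_le_limsup_add_limsup _ _).trans_eq ?_
        rw [ENNReal.limsup_const_mul_of_ne_top ENNReal.ofReal_ne_top,
          limsup_comp_const_mul_atTop (scaledSv p Y) hδ]

lemma liminf_scaledSv_add_le (hδ : 0 < δ) :
    liminf (scaledSv p (X + Y)) atTop ≤ ENNReal.ofReal ((1 + δ) ^ (1 / p)) *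
      (liminf (scaledSv p X) atTop +
        ENNReal.ofReal (δ ^ (-(1 / p))) * limsup (scaledSv p Y) atTop) := by
  calc liminf (scaledSv p (X + Y)) atTop
      = liminf (fun t => scaledSv p (X + Y) ((1 + δ) * t)) atTop :=
        (liminf_comp_const_mul_atTop _ (by linarith)).symm
    _ ≤ liminf (fun t => ENNReal.ofReal ((1 + δ) ^ (1 / p)) *
          (scaledSv p X t + ENNReal.ofReal (δ ^ (-(1 / p))) * scaledSv p Y (δ * t))) atTop :=
        liminf_le_liminf ((eventually_ge_atTop 0).mono fun t ht => scaledSv_add_le p X Y hδ ht)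
    _ ≤ _ := by
        rw [ENNReal.liminf_const_mul_of_ne_top ENNReal.ofReal_ne_top]
        gcongr
        refine (liminf_add_le_liminf_add_limsup _ _).trans_eq ?_
        rw [ENNReal.limsup_const_mul_of_ne_top ENNReal.ofReal_ne_top,
          limsup_comp_const_mul_atTop (scaledSv p Y) hδ]

lemma limsup_scaledSv_le_wdist (T : H →L[ℂ] H) : limsup (scaledSv p T) atTop ≤ wdist p T := by
  refine le_iInf₂ fun B hB => le_of_forall_le_ofReal_one_add_rpow_mul (q := 1 / p) fun δ hδ => ?_
  have hB0 : limsup (scaledSv p B) atTop = 0 := by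
    simpa using (tendsto_scaledSv hB).limsup_eq
  calc limsup (scaledSv p T) atTop = limsup (scaledSv p (T - B + B)) atTop := by
        rw [sub_add_cancel]
    _ ≤ ENNReal.ofReal ((1 + δ) ^ (1 / p)) * limsup (scaledSv p (T - B)) atTop := by
        simpa [hB0] using limsup_scaledSv_add_le p (T - B) B hδ
    _ ≤ _ := by gcongr; exact limsup_scaledSv_le_wnorm p (T - B)

lemma eventually_nonneg_rpow_mul_sv (T : H →L[ℂ] H) :
    ∀ᶠ t : ℝ in atTop, 0 ≤ t ^ (1 / p) * sv T t :=
  (eventually_ge_atTop 0).mono fun t ht => mul_nonneg (Real.rpow_nonneg ht _) (sv_nonneg T t)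

variable {p X} {c : ℝ}

lemma limsup_scaledSv_le_of_tendsto
    (hX : Tendsto (fun t : ℝ => t ^ (1 / p) * sv X t) atTop (𝓝 c)) (hδ : 0 < δ) :
    limsup (scaledSv p Y) atTop ≤ ENNReal.ofReal ((1 + δ) ^ (1 / p)) *
      (ENNReal.ofReal c + ENNReal.ofReal (δ ^ (-(1 / p))) * limsup (scaledSv p (X - Y)) atTop) := by
  have h := limsup_scaledSv_add_le p X (Y - X) hδ
  rwa [add_sub_cancel, (tendsto_scaledSv hX).limsup_eq, ← neg_sub, scaledSv_neg] at h

lemma ofReal_le_liminf_scaledSv_of_tendsto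
    (hX : Tendsto (fun t : ℝ => t ^ (1 / p) * sv X t) atTop (𝓝 c)) (hδ : 0 < δ) :
    ENNReal.ofReal c ≤ ENNReal.ofReal ((1 + δ) ^ (1 / p)) *
      (liminf (scaledSv p Y) atTop +
        ENNReal.ofReal (δ ^ (-(1 / p))) * limsup (scaledSv p (X - Y)) atTop) := by
  have h := liminf_scaledSv_add_le p Y (X - Y) hδ
  rwa [add_sub_cancel, (tendsto_scaledSv hX).liminf_eq] at h

end

lemma tendsto_toReal_of_limsup_ofReal_le_of_le_liminf {α : Type*} {l : Filter α} [l.NeBot]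
    {f : α → ℝ} {x : ℝ≥0∞} (hf : ∀ᶠ a in l, 0 ≤ f a) (hx : x ≠ ⊤)
    (hsup : limsup (fun a => ENNReal.ofReal (f a)) l ≤ x)
    (hinf : x ≤ liminf (fun a => ENNReal.ofReal (f a)) l) : Tendsto f l (𝓝 x.toReal) :=
  ((ENNReal.tendsto_toReal hx).comp (tendsto_of_le_liminf_of_limsup_le hinf hsup)).congr'
    (hf.mono fun _ ha => ENNReal.toReal_ofReal ha)

theorem stmt4_general (p : ℝ) (A : H →L[ℂ] H) (Aseq : ℕ → (H →L[ℂ] H)) (c : ℕ → ℝ)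
    (hlim : ∀ l, Tendsto (fun t : ℝ => t ^ (1 / p) * sv (Aseq l) t) atTop (𝓝 (c l)))
    (hdist : Tendsto (fun l => wdist p (Aseq l - A)) atTop (𝓝 0)) :
    ∃ cinf : ℝ, Tendsto c atTop (𝓝 cinf) ∧
      Tendsto (fun t : ℝ => t ^ (1 / p) * sv A t) atTop (𝓝 cinf) := by
  have he : Tendsto (fun l => limsup (scaledSv p (Aseq l - A)) atTop) atTop (𝓝 0) :=
    tendsto_of_tendsto_of_tendsto_of_le_of_le tendsto_const_nhds hdist (fun _ => zero_le)
      fun l => limsup_scaledSv_le_wdist p _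
  have hc_le : limsup (fun l => ENNReal.ofReal (c l)) atTop ≤ liminf (scaledSv p A) atTop :=
    le_of_forall_le_ofReal_one_add_rpow_mul fun δ hδ =>
      limsup_le_mul_of_le_mul_add ENNReal.ofReal_ne_top ENNReal.ofReal_ne_top he
        fun l => ofReal_le_liminf_scaledSv_of_tendsto A (hlim l) hδ
  have hA_le : limsup (scaledSv p A) atTop ≤ liminf (fun l => ENNReal.ofReal (c l)) atTop :=
    le_of_forall_le_ofReal_one_add_rpow_mul fun δ hδ =>
      le_mul_liminf_of_le_mul_add ENNReal.ofReal_ne_top ENNReal.ofReal_ne_top he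
        fun l => limsup_scaledSv_le_of_tendsto A (hlim l) hδ
  have hA_fin : limsup (scaledSv p A) atTop ≠ ⊤ := by
    obtain ⟨l, hl⟩ := (he.eventually (gt_mem_nhds zero_lt_one)).exists
    exact ne_top_of_le_ne_top (by finiteness) (limsup_scaledSv_le_of_tendsto A (hlim l) one_pos)
  have hc_nonneg (l : ℕ) : 0 ≤ c l := ge_of_tendsto (hlim l) (eventually_nonneg_rpow_mul_sv p _)
  exact ⟨_, tendsto_toReal_of_limsup_ofReal_le_of_le_liminf (.of_forall hc_nonneg) hA_fin
    (hc_le.trans liminf_le_limsup) hA_le,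
    tendsto_toReal_of_limsup_ofReal_le_of_le_liminf (eventually_nonneg_rpow_mul_sv p A) hA_fin
      le_rfl (hA_le.trans (le_trans liminf_le_limsup hc_le))⟩

/-- If `Aₗ ∈ 𝓛_{p,∞}` satisfy `t^{1/p} μ(t,Aₗ) → cₗ` and
`dist(Aₗ - A, (𝓛_{p,∞})₀) → 0`, then `lim_t t^{1/p} μ(t,A)` and `lim_l cₗ`
both exist and are equal. -/
theorem stmt4 (p : ℝ) (hp : 0 < p) (A : H →L[ℂ] H) (Aseq : ℕ → (H →L[ℂ] H)) (c : ℕ → ℝ)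
    (hcpt : ∀ l, IsCompactOperator (Aseq l))
    (hmem : ∀ l, wnorm p (Aseq l) ≠ ⊤)
    (hlim : ∀ l, Tendsto (fun t : ℝ => t ^ (1 / p) * sv (Aseq l) t) atTop (𝓝 (c l)))
    (hdist : Tendsto (fun l => wdist p (Aseq l - A)) atTop (𝓝 0)) :
    ∃ cinf : ℝ, Tendsto c atTop (𝓝 cinf) ∧
      Tendsto (fun t : ℝ => t ^ (1 / p) * sv A t) atTop (𝓝 cinf) :=
  stmt4_general p A Aseq c hlim hdist
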